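/- Let 0 < ρ < 1/3 and let E be the attractor of {φ₁(x)=ρx, φ₂(x)=ρx+ρ, φ₃(x)=ρx+1−ρ}. Then for every 0 < r < 1 and every t ∈ ℝ, the set −rE + t is not contained in φ₁(E) ∪ φ₂(E). -/

import Mathlib

/-!
Dividing by `ρ`, the hypothesis says that `x ↦ (t + ρ - r x) / ρ` maps `E` into
`D = E ∪ (E + 1) ∪ (E + 2)`; since `ρ² D + (ρ - ρ²) ⊆ E`, some map `x ↦ q - s x` with `s = rρ > 0`
sends `D` into itself. Now `D ⊆ [0, 3]` contains `0` and `3`, lies in the clusters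
`[j - ρ, j + 2ρ]` (`j ∈ ℤ`) separated by gaps of length `1 - 3ρ`, and every point of `[0, 3]` is
within `(1 - 3ρ) / 2` of `D`. So for `s < 1` such a map cannot jump a gap: its image lies in one
cluster, which rescaled by `1 / ρ` lies in `D` again, and `s` may be replaced by `s / ρ`. The
endpoints force `s ≤ 1`, and `s = 1` would make `D` symmetric about `3 / 2`, which it is not; so
`s / ρⁿ < 1` for all `n`, which is absurd.
-/

open Set Metric

namespace RhoAttractor

def hutchinson (ρ : ℝ) (E : Set ℝ) : Set ℝ :=
  (fun x : ℝ => ρ * x) '' E ∪ (fun x : ℝ => ρ * x + ρ) '' E ∪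
    (fun x : ℝ => ρ * x + (1 - ρ)) '' E

variable {ρ : ℝ} {E : Set ℝ}

theorem mem_iff_exists_mul_add (hE : E = hutchinson ρ E) {x : ℝ} :
    x ∈ E ↔ ∃ y ∈ E, ∃ b ∈ ({0, ρ, 1 - ρ} : Set ℝ), x = ρ * y + b := by
  conv_lhs => rw [hE]
  simp only [hutchinson, mem_union, mem_image, mem_insert_iff, mem_singleton_iff]
  constructor
  · rintro ((⟨y, hy, rfl⟩ | ⟨y, hy, rfl⟩) | ⟨y, hy, rfl⟩)
    exacts [⟨y, hy, 0, by simp⟩, ⟨y, hy, ρ, by simp⟩, ⟨y, hy, 1 - ρ, by simp⟩]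
  · rintro ⟨y, hy, b, rfl | rfl | rfl, rfl⟩
    exacts [Or.inl (Or.inl ⟨y, hy, by simp⟩), Or.inl (Or.inr ⟨y, hy, rfl⟩), Or.inr ⟨y, hy, rfl⟩]

theorem mul_add_mem (hE : E = hutchinson ρ E) {y b : ℝ} (hy : y ∈ E)
    (hb : b ∈ ({0, ρ, 1 - ρ} : Set ℝ)) : ρ * y + b ∈ E :=
  (mem_iff_exists_mul_add hE).2 ⟨y, hy, b, hb, rfl⟩

theorem isGreatest_one (hρ0 : 0 ≤ ρ) (hρ : ρ ≤ 1 / 2) (hEc : IsCompact E) (hEne : E.Nonempty)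
    (hE : E = hutchinson ρ E) : IsGreatest E 1 := by
  have hM : sSup E ∈ E := hEc.sSup_mem hEne
  have hle : ∀ x ∈ E, x ≤ sSup E := fun x hx => le_csSup hEc.bddAbove hx
  have h1 : 1 ≤ sSup E := by
    have := hle _ (mul_add_mem hE hM (b := 1 - ρ) (by simp))
    nlinarith
  obtain ⟨y, hy, b, hb, hMy⟩ := (mem_iff_exists_mul_add hE).1 hM
  have hρy := mul_le_mul_of_nonneg_left (hle y hy) hρ0
  have : sSup E ≤ 1 := by
    rcases hb with rfl | rfl | rfl <;> nlinarith
  exact ⟨le_antisymm this h1 ▸ hM, fun x hx => (hle x hx).trans this⟩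

theorem isLeast_zero (hρ0 : 0 ≤ ρ) (hρ1 : ρ < 1) (hEc : IsCompact E) (hEne : E.Nonempty)
    (hE : E = hutchinson ρ E) : IsLeast E 0 := by
  have hm : sInf E ∈ E := hEc.sInf_mem hEne
  have hge : ∀ x ∈ E, sInf E ≤ x := fun x hx => csInf_le hEc.bddBelow hx
  have h0 : sInf E ≤ 0 := by
    have := hge _ (mul_add_mem hE hm (b := 0) (by simp))
    nlinarith
  obtain ⟨y, hy, b, hb, hmy⟩ := (mem_iff_exists_mul_add hE).1 hm
  have hρy := mul_le_mul_of_nonneg_left (hge y hy) hρ0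
  have : 0 ≤ sInf E := by
    rcases hb with rfl | rfl | rfl <;> nlinarith
  exact ⟨le_antisymm h0 this ▸ hm, fun x hx => this.trans (hge x hx)⟩

theorem subset_Icc (hρ0 : 0 ≤ ρ) (hρ : ρ ≤ 1 / 2) (hEc : IsCompact E) (hEne : E.Nonempty)
    (hE : E = hutchinson ρ E) : E ⊆ Icc 0 1 := fun _ hx =>
  ⟨(isLeast_zero hρ0 (by linarith) hEc hEne hE).2 hx, (isGreatest_one hρ0 hρ hEc hEne hE).2 hx⟩

theorem notMem_Ioo_of_mem (hρ0 : 0 ≤ ρ) (hE : E = hutchinson ρ E) (hsub : E ⊆ Icc 0 1) {x : ℝ}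
    (hx : x ∈ E) : x ∉ Ioo (2 * ρ) (1 - ρ) := by
  obtain ⟨y, hy, b, hb, rfl⟩ := (mem_iff_exists_mul_add hE).1 hx
  obtain ⟨hy0, hy1⟩ := hsub hy
  rintro ⟨hl, hu⟩
  rcases hb with rfl | rfl | rfl <;> nlinarith

theorem pow_mem (hE : E = hutchinson ρ E) (h1 : (1 : ℝ) ∈ E) (n : ℕ) : ρ ^ n ∈ E := by
  induction n with
  | zero => simpa using h1
  | succ n ih => simpa [pow_succ, mul_comm] using mul_add_mem hE ih (b := 0) (by simp)

theorem infDist_mul_add_le (hρ0 : 0 ≤ ρ) (hEc : IsCompact E) (hEne : E.Nonempty) {b : ℝ}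
    (hb : MapsTo (fun y => ρ * y + b) E E) (z : ℝ) :
    infDist (ρ * z + b) E ≤ ρ * infDist z E := by
  obtain ⟨y, hy, hzy⟩ := hEc.exists_infDist_eq_dist hEne z
  calc infDist (ρ * z + b) E ≤ dist (ρ * z + b) (ρ * y + b) := infDist_le_dist_of_mem (hb hy)
    _ = ρ * infDist z E := by
      rw [hzy, Real.dist_eq, Real.dist_eq, show ρ * z + b - (ρ * y + b) = ρ * (z - y) by ring,
        abs_mul, abs_of_nonneg hρ0]

theorem infDist_le_of_mem_Icc (hρ0 : 0 < ρ) (hρ3 : ρ < 1 / 3) (hEc : IsCompact E)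
    (hEne : E.Nonempty) (hE : E = hutchinson ρ E) {x : ℝ} (hx : x ∈ Icc 0 1) :
    infDist x E ≤ (1 - 3 * ρ) / 2 := by
  have h0 := (isLeast_zero hρ0.le (by linarith) hEc hEne hE).1
  have h1 := (isGreatest_one hρ0.le (by linarith) hEc hEne hE).1
  obtain ⟨x₀, hx₀, hmax⟩ := isCompact_Icc.exists_isMaxOn (nonempty_Icc.2 zero_le_one)
    (continuous_infDist_pt E).continuousOn
  suffices infDist x₀ E ≤ (1 - 3 * ρ) / 2 from (hmax hx).trans this
  -- On each first-level interval, a copy of `[0, 1]` scaled by `ρ`, the distance to `E` is at most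
  -- `ρ` times its maximum; so the maximum is attained in `[2ρ, 1 - ρ]`, whose endpoints lie in `E`.
  have hpiece : ∀ b ∈ ({0, ρ, 1 - ρ} : Set ℝ), x₀ ∈ Icc b (b + ρ) →
      infDist x₀ E ≤ ρ * infDist x₀ E := by
    intro b hb hxb
    have hz : (x₀ - b) / ρ ∈ Icc 0 1 := by
      rw [mem_Icc, le_div_iff₀ hρ0, div_le_iff₀ hρ0]
      exact ⟨by linarith [hxb.1], by linarith [hxb.2]⟩
    calc infDist x₀ E = infDist (ρ * ((x₀ - b) / ρ) + b) E := by
          rw [mul_div_cancel₀ _ hρ0.ne', sub_add_cancel]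
      _ ≤ ρ * infDist ((x₀ - b) / ρ) E :=
          infDist_mul_add_le hρ0.le hEc hEne (fun y hy => mul_add_mem hE hy hb) _
      _ ≤ ρ * infDist x₀ E := mul_le_mul_of_nonneg_left (hmax hz) hρ0.le
  have hpos := infDist_nonneg (x := x₀) (s := E)
  rcases le_or_gt x₀ (2 * ρ) with hlow | hmid
  · rcases le_or_gt x₀ ρ with hl | hl
    · nlinarith [hpiece 0 (by simp) ⟨by simpa using hx₀.1, by simpa using hl⟩]
    · nlinarith [hpiece ρ (by simp) ⟨hl.le, by linarith⟩]
  rcases le_or_gt (1 - ρ) x₀ with hhigh | hgap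
  · nlinarith [hpiece (1 - ρ) (by simp) ⟨hhigh, by linarith [hx₀.2]⟩]
  have hl := infDist_le_dist_of_mem (x := x₀)
    (by simpa using mul_add_mem hE h1 (b := ρ) (by simp))
  have hr := infDist_le_dist_of_mem (x := x₀)
    (by simpa using mul_add_mem hE h0 (b := 1 - ρ) (by simp))
  rw [Real.dist_eq, abs_of_pos (by linarith)] at hl
  rw [Real.dist_eq, abs_of_neg (by linarith)] at hr
  linarith

def threeCopies (E : Set ℝ) : Set ℝ := {x | ∃ i ∈ Icc (0 : ℤ) 2, x - i ∈ E}

theorem add_intCast_mem_threeCopies {e : ℝ} (he : e ∈ E) {i : ℤ} (hi : i ∈ Icc 0 2) :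
    e + i ∈ threeCopies E :=
  ⟨i, hi, by simpa using he⟩

theorem mem_threeCopies_of_mem {e : ℝ} (he : e ∈ E) : e ∈ threeCopies E := by
  simpa using add_intCast_mem_threeCopies he (i := 0) (by simp)

theorem threeCopies_subset_Icc (hsub : E ⊆ Icc 0 1) : threeCopies E ⊆ Icc 0 3 := by
  rintro x ⟨i, ⟨hi0, hi2⟩, hx⟩
  have : (0 : ℝ) ≤ i ∧ (i : ℝ) ≤ 2 := ⟨by exact_mod_cast hi0, by exact_mod_cast hi2⟩
  exact ⟨by linarith [(hsub hx).1], by linarith [(hsub hx).2]⟩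

theorem notMem_Ioo_of_mem_threeCopies (hρ0 : 0 ≤ ρ) (hE : E = hutchinson ρ E)
    (hsub : E ⊆ Icc 0 1) {x : ℝ} (hx : x ∈ threeCopies E) (j : ℤ) :
    x ∉ Ioo (j + 2 * ρ) (j + 1 - ρ) := by
  obtain ⟨i, -, hxi⟩ := hx
  obtain ⟨h0, h1⟩ := hsub hxi
  rintro ⟨hl, hu⟩
  rcases lt_trichotomy j i with hji | rfl | hij
  · have : (j : ℝ) + 1 ≤ i := by exact_mod_cast Int.add_one_le_iff.2 hji
    linarith
  · exact notMem_Ioo_of_mem hρ0 hE hsub hxi ⟨by linarith, by linarith⟩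
  · have : (i : ℝ) + 1 ≤ j := by exact_mod_cast Int.add_one_le_iff.2 hij
    linarith

theorem exists_mem_Icc_of_mem_threeCopies (hρ0 : 0 ≤ ρ) (hE : E = hutchinson ρ E)
    (hsub : E ⊆ Icc 0 1) {x : ℝ} (hx : x ∈ threeCopies E) :
    ∃ j : ℤ, x ∈ Icc (j - ρ) (j + 2 * ρ) := by
  obtain ⟨i, -, hxi⟩ := hx
  obtain ⟨h0, h1⟩ := hsub hxi
  rcases le_or_gt (x - i) (2 * ρ) with hlow | hhigh
  · exact ⟨i, by linarith, by linarith⟩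
  · have := notMem_Ioo_of_mem hρ0 hE hsub hxi
    refine ⟨i + 1, ?_, ?_⟩ <;> push_cast
    · by_contra! h
      exact this ⟨hhigh, by linarith⟩
    · linarith

theorem div_mem_threeCopies_of_mem_Icc (hρ0 : 0 < ρ) (hρ3 : ρ < 1 / 3) (hE : E = hutchinson ρ E)
    (hsub : E ⊆ Icc 0 1) {x : ℝ} (hx : x ∈ threeCopies E) {j : ℤ}
    (hxj : x ∈ Icc (j - ρ) (j + 2 * ρ)) : (x - (j - ρ)) / ρ ∈ threeCopies E := by
  obtain ⟨i, -, hxi⟩ := hx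
  obtain ⟨y, hy, b, hb, hxy⟩ := (mem_iff_exists_mul_add hE).1 hxi
  obtain ⟨h0, h1⟩ := hsub hy
  obtain ⟨hx0, hx1⟩ := hsub hxi
  obtain ⟨hl, hu⟩ := hxj
  have hij : i < j + 1 ∧ j < i + 2 := by
    constructor
    · exact_mod_cast (by linarith : (i : ℝ) < j + 1)
    · exact_mod_cast (by linarith : (j : ℝ) < i + 2)
  obtain rfl | rfl : j = i ∨ j = i + 1 := by omega
  · rcases hb with rfl | rfl | rfl
    · convert add_intCast_mem_threeCopies hy (i := 1) (by simp) using 1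
      field_simp; push_cast; linarith
    · convert add_intCast_mem_threeCopies hy (i := 2) (by simp) using 1
      field_simp; push_cast; linarith
    · nlinarith
  · rcases hb with rfl | rfl | rfl
    · push_cast at hl; nlinarith
    · push_cast at hl; nlinarith
    · convert mem_threeCopies_of_mem hy using 1
      field_simp; push_cast; linarith

theorem exists_mem_threeCopies_abs_sub_le (hρ0 : 0 < ρ) (hρ3 : ρ < 1 / 3) (hEc : IsCompact E)
    (hEne : E.Nonempty) (hE : E = hutchinson ρ E) {w : ℝ} (hw : w ∈ Icc 0 3) :
    ∃ y ∈ threeCopies E, |w - y| ≤ (1 - 3 * ρ) / 2 := by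
  obtain ⟨i, hi, hwi⟩ : ∃ i ∈ Icc (0 : ℤ) 2, w - i ∈ Icc 0 1 := by
    obtain ⟨h0, h3⟩ := hw
    rcases le_total w 1 with h1 | h1
    · exact ⟨0, by simp, by simp [h0, h1]⟩
    rcases le_total w 2 with h2 | h2
    · exact ⟨1, by simp, by push_cast; constructor <;> linarith⟩
    · exact ⟨2, by simp, by push_cast; constructor <;> linarith⟩
  obtain ⟨y, hy, hdist⟩ := hEc.exists_infDist_eq_dist hEne (w - i)
  refine ⟨y + i, add_intCast_mem_threeCopies hy hi, ?_⟩
  rw [show w - (y + i) = w - i - y by ring, ← Real.dist_eq, ← hdist]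
  exact infDist_le_of_mem_Icc hρ0 hρ3 hEc hEne hE hwi

theorem mul_sq_add_mem (hE : E = hutchinson ρ E) {x : ℝ} (hx : x ∈ threeCopies E) :
    ρ ^ 2 * x + (ρ - ρ ^ 2) ∈ E := by
  obtain ⟨i, hi, he⟩ := hx
  obtain rfl | rfl | rfl : i = 0 ∨ i = 1 ∨ i = 2 := by simp only [mem_Icc] at hi; omega
  · convert mul_add_mem hE (mul_add_mem hE he (b := 1 - ρ) (by simp)) (b := 0) (by simp) using 1
    push_cast; ring
  · convert mul_add_mem hE (mul_add_mem hE he (b := 0) (by simp)) (b := ρ) (by simp) using 1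
    push_cast; ring
  · convert mul_add_mem hE (mul_add_mem hE he (b := ρ) (by simp)) (b := ρ) (by simp) using 1
    push_cast; ring

theorem not_forall_three_sub_mem (hρ0 : 0 < ρ) (hρ3 : ρ < 1 / 3) (hE : E = hutchinson ρ E)
    (hsub : E ⊆ Icc 0 1) (h1 : (1 : ℝ) ∈ E) : ¬ ∀ x ∈ threeCopies E, 3 - x ∈ threeCopies E := by
  intro hsymm
  -- `p` lies in `E` just above `ρ`, so `1 - p` would lie in the gap just below `1 - ρ`.
  obtain ⟨n, hn⟩ := exists_pow_lt_of_lt_one (by linarith : 0 < 1 - 3 * ρ) (by linarith : ρ < 1)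
  set p := ρ * ρ ^ n + ρ
  have hp : p ∈ E := mul_add_mem hE (pow_mem hE h1 n) (by simp)
  have hpn : 0 < ρ * ρ ^ n ∧ ρ * ρ ^ n < ρ ^ n := by
    constructor <;> nlinarith [pow_pos hρ0 n]
  obtain ⟨i, ⟨hi0, hi2⟩, hi⟩ := hsymm p (mem_threeCopies_of_mem hp)
  obtain rfl | hi1 : i = 2 ∨ i ≤ 1 := by omega
  · exact notMem_Ioo_of_mem hρ0.le hE hsub hi ⟨by push_cast; linarith, by push_cast; linarith⟩
  · have : (i : ℝ) ≤ 1 := by exact_mod_cast hi1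
    linarith [(hsub hi).2]

theorem notMem_image_Icc_of_forall_notMem_Ioo {A B : Set ℝ} {a b c q s m : ℝ} (hc : 0 < c)
    (hs : |s| < 1) (hA : ∀ w ∈ Icc a b, ∃ y ∈ A, |w - y| ≤ c)
    (hf : MapsTo (fun x => q - s * x) A B) (hB : ∀ x ∈ B, x ∉ Ioo (m - c) (m + c)) :
    m ∉ (fun x => q - s * x) '' Icc a b := by
  rintro ⟨w, hw, rfl⟩
  obtain ⟨y, hy, hwy⟩ := hA w hw
  have : |(q - s * y) - (q - s * w)| < c :=
    calc |(q - s * y) - (q - s * w)| = |s| * |w - y| := by rw [← abs_mul]; ring_nf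
      _ ≤ |s| * c := mul_le_mul_of_nonneg_left hwy (abs_nonneg s)
      _ < c := mul_lt_of_lt_one_left hc hs
  rw [abs_sub_lt_iff] at this
  exact hB _ (hf hy) ⟨by linarith, by linarith⟩

theorem exists_mapsTo_Icc (hρ0 : 0 < ρ) (hρ3 : ρ < 1 / 3) (hEc : IsCompact E)
    (hEne : E.Nonempty) (hE : E = hutchinson ρ E) {q s : ℝ} (hs0 : 0 < s) (hs1 : s < 1)
    (hf : MapsTo (fun x => q - s * x) (threeCopies E) (threeCopies E)) :
    ∃ j : ℤ, MapsTo (fun x => q - s * x) (threeCopies E) (Icc (j - ρ) (j + 2 * ρ)) := by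
  have hsub := subset_Icc hρ0.le (by linarith) hEc hEne hE
  have h0 := (isLeast_zero hρ0.le (by linarith) hEc hEne hE).1
  have hq : q ∈ threeCopies E := by simpa using hf (mem_threeCopies_of_mem h0)
  obtain ⟨j, hjl, hju⟩ := exists_mem_Icc_of_mem_threeCopies hρ0.le hE hsub hq
  refine ⟨j, fun d hd => ?_⟩
  obtain ⟨hd0, hd3⟩ := threeCopies_subset_Icc hsub hd
  refine ⟨?_, by nlinarith⟩
  by_contra! hlt
  -- Otherwise the image of `[0, d]` contains the midpoint `m` of the gap below `j - ρ`, but the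
  -- image of `threeCopies E` comes within `s (1 - 3ρ) / 2 < (1 - 3ρ) / 2` of each of its points.
  set c := (1 - 3 * ρ) / 2 with hc
  set m := j - ρ - c with hm
  have hgap : ∀ x ∈ threeCopies E, x ∉ Ioo (m - c) (m + c) := by
    intro x hx
    rw [show m - c = ((j - 1 : ℤ) : ℝ) + 2 * ρ by push_cast; linarith,
      show m + c = ((j - 1 : ℤ) : ℝ) + 1 - ρ by push_cast; linarith]
    exact notMem_Ioo_of_mem_threeCopies hρ0.le hE hsub hx (j - 1)
  have hfd : q - s * d ≤ m - c := by
    by_contra! h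
    exact hgap _ (hf hd) ⟨h, by linarith⟩
  refine notMem_image_Icc_of_forall_notMem_Ioo (a := 0) (b := d) (m := m) (by linarith)
    (by rwa [abs_of_pos hs0]) (fun w hw => exists_mem_threeCopies_abs_sub_le hρ0 hρ3 hEc hEne hE
      ⟨hw.1, hw.2.trans hd3⟩) hf hgap
    (intermediate_value_Icc' hd0 (by fun_prop) ⟨by linarith, by simp; linarith⟩)

theorem exists_mapsTo_div (hρ0 : 0 < ρ) (hρ3 : ρ < 1 / 3) (hEc : IsCompact E)
    (hEne : E.Nonempty) (hE : E = hutchinson ρ E) {q s : ℝ} (hs0 : 0 < s) (hs1 : s < 1)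
    (hf : MapsTo (fun x => q - s * x) (threeCopies E) (threeCopies E)) :
    ∃ q', MapsTo (fun x => q' - s / ρ * x) (threeCopies E) (threeCopies E) := by
  have hsub := subset_Icc hρ0.le (by linarith) hEc hEne hE
  obtain ⟨j, hj⟩ := exists_mapsTo_Icc hρ0 hρ3 hEc hEne hE hs0 hs1 hf
  refine ⟨(q - (j - ρ)) / ρ, fun d hd => ?_⟩
  convert div_mem_threeCopies_of_mem_Icc hρ0 hρ3 hE hsub (hf hd) (hj hd) using 1
  field_simp
  ring

theorem lt_one_of_mapsTo (hρ0 : 0 < ρ) (hρ3 : ρ < 1 / 3) (hEc : IsCompact E)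
    (hEne : E.Nonempty) (hE : E = hutchinson ρ E) {q s : ℝ}
    (hf : MapsTo (fun x => q - s * x) (threeCopies E) (threeCopies E)) : s < 1 := by
  have hsub := subset_Icc hρ0.le (by linarith) hEc hEne hE
  have h0 := (isLeast_zero hρ0.le (by linarith) hEc hEne hE).1
  have h1 := (isGreatest_one hρ0.le (by linarith) hEc hEne hE).1
  have hq : q ≤ 3 := by
    simpa using (threeCopies_subset_Icc hsub (hf (mem_threeCopies_of_mem h0))).2
  have h3 : (3 : ℝ) ∈ threeCopies E := by
    convert add_intCast_mem_threeCopies h1 (i := 2) (by simp) using 1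
    norm_num
  have hq3 : 0 ≤ q - s * 3 := (threeCopies_subset_Icc hsub (hf h3)).1
  refine lt_of_le_of_ne (by linarith) fun hs => not_forall_three_sub_mem hρ0 hρ3 hE hsub h1 ?_
  intro x hx
  simpa [hs, show q = 3 by linarith] using hf hx

theorem not_mapsTo (hρ0 : 0 < ρ) (hρ3 : ρ < 1 / 3) (hEc : IsCompact E)
    (hEne : E.Nonempty) (hE : E = hutchinson ρ E) {q s : ℝ} (hs : 0 < s) :
    ¬ MapsTo (fun x => q - s * x) (threeCopies E) (threeCopies E) := by
  intro hf
  have hzoom : ∀ n : ℕ, ∃ q',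
      MapsTo (fun x => q' - s / ρ ^ n * x) (threeCopies E) (threeCopies E) := by
    intro n
    induction n with
    | zero => exact ⟨q, by simpa using hf⟩
    | succ n ih =>
      obtain ⟨q', hq'⟩ := ih
      obtain ⟨q'', hq''⟩ := exists_mapsTo_div hρ0 hρ3 hEc hEne hE (by positivity)
        (lt_one_of_mapsTo hρ0 hρ3 hEc hEne hE hq') hq'
      exact ⟨q'', by rwa [pow_succ, ← div_div]⟩
  obtain ⟨n, hn⟩ := exists_pow_lt_of_lt_one hs (by linarith : ρ < 1)
  obtain ⟨q', hq'⟩ := hzoom n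
  have := lt_one_of_mapsTo hρ0 hρ3 hEc hEne hE hq'
  rw [div_lt_one (pow_pos hρ0 n)] at this
  linarith

theorem div_add_mem_threeCopies_of_mem_union (hρ : ρ ≠ 0) {x : ℝ}
    (hx : x ∈ (fun x : ℝ => ρ * x) '' E ∪ (fun x : ℝ => ρ * x + ρ) '' E) :
    (x + ρ) / ρ ∈ threeCopies E := by
  rcases hx with ⟨y, hy, rfl⟩ | ⟨y, hy, rfl⟩
  · convert add_intCast_mem_threeCopies hy (i := 1) (by simp) using 1
    field_simp; push_cast; ring
  · convert add_intCast_mem_threeCopies hy (i := 2) (by simp) using 1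
    field_simp; push_cast; ring

end RhoAttractor

open RhoAttractor in
theorem no_negative_any_translation (ρ : ℝ) (E : Set ℝ)
    (hρ0 : 0 < ρ) (hρ3 : ρ < 1 / 3)
    (hEc : IsCompact E) (hEne : E.Nonempty)
    (hE : E = (fun x : ℝ => ρ * x) '' E ∪ (fun x : ℝ => ρ * x + ρ) '' E ∪
        (fun x : ℝ => ρ * x + (1 - ρ)) '' E) :
    ∀ r t : ℝ, 0 < r → r < 1 →
      ¬ (fun x : ℝ => -r * x + t) '' E ⊆
          (fun x : ℝ => ρ * x) '' E ∪ (fun x : ℝ => ρ * x + ρ) '' E := by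
  intro r t hr0 _ H
  refine not_mapsTo hρ0 hρ3 hEc hEne hE (mul_pos hr0 hρ0) (q := (t + ρ) / ρ - r + r * ρ)
    fun d hd => ?_
  convert div_add_mem_threeCopies_of_mem_union hρ0.ne'
    (H (mem_image_of_mem _ (mul_sq_add_mem hE hd))) using 1
  field_simp
  ring
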